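/- arXiv:1902.08861 — 4 statements merged into one kernel-verified Lean document; each statement's English description precedes it below -/
import Mathlib

section
/- A quadratic function q(x) = x^T Q x + 2 c^T x + b is nonnegative on the nonnegative orthant ℝ^n_+ if and only if the matrix M(q) = [[Q, c],[c^T, b]] is copositive (i.e., z^T M(q) z ≥ 0 for all z ∈ ℝ^{n+1} with z ≥ 0). -/
open Matrix BigOperators

/-- The matrix representation `M(q) = [[Q, c],[cᵀ, b]]`. -/
def Mq {n : ℕ} (Q : Matrix (Fin n) (Fin n) ℝ) (c : Fin n → ℝ) (b : ℝ) :
    Matrix (Fin n ⊕ Unit) (Fin n ⊕ Unit) ℝ :=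
  Matrix.of fun i j =>
    match i, j with
    | Sum.inl i, Sum.inl j => Q i j
    | Sum.inl i, Sum.inr _ => c i
    | Sum.inr _, Sum.inl j => c j
    | Sum.inr _, Sum.inr _ => b

/-- A symmetric matrix is copositive if its quadratic form is nonnegative on
the nonnegative orthant. -/
def Copositive {ι : Type*} [Fintype ι] (A : Matrix ι ι ℝ) : Prop :=
  ∀ z : ι → ℝ, (∀ i, 0 ≤ z i) → 0 ≤ z ⬝ᵥ A.mulVec z

lemma Mq_key {n : ℕ} (Q : Matrix (Fin n) (Fin n) ℝ) (c : Fin n → ℝ) (b : ℝ)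
    (x : Fin n → ℝ) (t : ℝ) :
    (Sum.elim x fun _ : Unit => t) ⬝ᵥ (Mq Q c b).mulVec (Sum.elim x fun _ => t)
      = x ⬝ᵥ Q.mulVec x + 2 * t * (c ⬝ᵥ x) + t ^ 2 * b := by
  have h1 : ∀ i, x i * ∑ j, Q i j * x j = ∑ j, x i * Q i j * x j := fun i => by
    rw [Finset.mul_sum]; exact Finset.sum_congr rfl fun j _ => by ring
  simp only [Mq, mulVec, dotProduct, Fintype.sum_sum_type, Finset.univ_unique,
    Finset.sum_singleton, Sum.elim_inl, Sum.elim_inr, of_apply, Finset.sum_add_distrib,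
    Finset.mul_sum, Finset.sum_mul, mul_add, h1]
  have h3 : (∑ i, t * (c i * x i)) + (∑ i, x i * (c i * t)) = ∑ i, 2 * t * (c i * x i) := by
    rw [← Finset.sum_add_distrib]; exact Finset.sum_congr rfl fun i _ => by ring
  have h4 : (∑ i, ∑ j, x i * (Q i j * x j)) = ∑ i, ∑ j, x i * Q i j * x j :=
    Finset.sum_congr rfl fun i _ => Finset.sum_congr rfl fun j _ => by ring
  have hb : t * (b * t) = t ^ 2 * b := by ring
  linarith [h3, h4, hb]

lemma quad_lead_nonneg (A B C : ℝ) (h : ∀ s : ℝ, 0 ≤ s → 0 ≤ s ^ 2 * A + s * B + C) :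
    0 ≤ A := by
  by_contra hA
  push_neg at hA
  set s : ℝ := max 1 ((|B| + |C| + 1) / (-A)) with hs
  have hs1 : (1 : ℝ) ≤ s := le_max_left _ _
  have hs0 : 0 ≤ s := by linarith
  have hs2 : (|B| + |C| + 1) / (-A) ≤ s := le_max_right _ _
  have hnA : 0 < -A := by linarith
  have hs3 : |B| + |C| + 1 ≤ s * (-A) := by
    rw [div_le_iff₀ hnA] at hs2; linarith
  have h2 := h s hs0
  have hB : B ≤ |B| := le_abs_self B
  have hC : C ≤ |C| := le_abs_self C
  have habs : (0:ℝ) ≤ |C| := abs_nonneg C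
  nlinarith [mul_le_mul_of_nonneg_left hs3 hs0, mul_le_mul_of_nonneg_left hB hs0,
    mul_le_mul_of_nonneg_right hC (by linarith : (0:ℝ) ≤ s - 1)]

theorem stmt_1 (n : ℕ) (Q : Matrix (Fin n) (Fin n) ℝ) (hQ : Q.IsSymm)
    (c : Fin n → ℝ) (b : ℝ) :
    (∀ x : Fin n → ℝ, (∀ i, 0 ≤ x i) →
        0 ≤ x ⬝ᵥ Q.mulVec x + 2 * (c ⬝ᵥ x) + b) ↔
      Copositive (Mq Q c b) := by
  constructor
  · intro h z hz
    set x : Fin n → ℝ := z ∘ Sum.inl with hx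
    set t : ℝ := z (Sum.inr ()) with ht
    have hzx : z = Sum.elim x fun _ => t := by
      funext i; cases i with
      | inl i => rfl
      | inr u => cases u; rfl
    rw [hzx, Mq_key]
    have hxpos : ∀ i, 0 ≤ x i := fun i => hz (Sum.inl i)
    have htpos : 0 ≤ t := hz (Sum.inr ())
    rcases eq_or_lt_of_le htpos with heq | hlt
    · -- t = 0 : need 0 ≤ x ⬝ᵥ Q.mulVec x, from the limit argument
      rw [← heq]
      simp only [mul_zero, zero_mul, add_zero, ne_eq, OfNat.ofNat_ne_zero,
        not_false_eq_true, zero_pow]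
      apply quad_lead_nonneg _ (2 * (c ⬝ᵥ x)) b
      intro s hs
      have := h (s • x) (fun i => by
        have := hxpos i
        simp only [Pi.smul_apply, smul_eq_mul]
        positivity)
      have e1 : (s • x) ⬝ᵥ Q.mulVec (s • x) = s ^ 2 * (x ⬝ᵥ Q.mulVec x) := by
        rw [smul_dotProduct, mulVec_smul, dotProduct_smul]
        simp [smul_eq_mul]; ring
      have e2 : c ⬝ᵥ (s • x) = s * (c ⬝ᵥ x) := by
        rw [dotProduct_smul]; simp [smul_eq_mul]
      rw [e1, e2] at this
      linarith
    · -- t > 0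
      have := h (t⁻¹ • x) (fun i => by
        have := hxpos i
        have : (0:ℝ) ≤ t⁻¹ := by positivity
        simp only [Pi.smul_apply, smul_eq_mul]
        positivity)
      have e1 : (t⁻¹ • x) ⬝ᵥ Q.mulVec (t⁻¹ • x) = t⁻¹ ^ 2 * (x ⬝ᵥ Q.mulVec x) := by
        rw [smul_dotProduct, mulVec_smul, dotProduct_smul]
        simp [smul_eq_mul]; ring
      have e2 : c ⬝ᵥ (t⁻¹ • x) = t⁻¹ * (c ⬝ᵥ x) := by
        rw [dotProduct_smul]; simp [smul_eq_mul]
      rw [e1, e2] at this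
      have ht0 : t ≠ 0 := ne_of_gt hlt
      have hmul := mul_nonneg (mul_nonneg (le_of_lt hlt) (le_of_lt hlt)) this
      have hrw : t * t * (t⁻¹ ^ 2 * (x ⬝ᵥ Q.mulVec x) + 2 * (t⁻¹ * (c ⬝ᵥ x)) + b)
          = x ⬝ᵥ Q.mulVec x + 2 * t * (c ⬝ᵥ x) + t ^ 2 * b := by
        field_simp
      linarith [hmul, hrw.symm ▸ hmul]
  · intro h x hx
    have := h (Sum.elim x fun _ => 1) (fun i => by
      cases i with
      | inl i => exact hx i
      | inr u => exact zero_le_one)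
    rw [Mq_key] at this
    linarith
end

section
/- Parrilo cone membership certificate (sufficiency): let B be a symmetric n×n matrix and suppose there exist symmetric matrices K^(1),…,K^(n) with (i) B − K^(i) ⪰ 0 for all i, (ii) K^(i)_{ii} = 0 for all i, (iii) K^(j)_{ii} + 2K^(i)_{ij} = 0 for all i ≠ j, and (iv) K^(i)_{jk} + K^(j)_{ik} + K^(k)_{ij} ≥ 0 for all i > j > k. Then the polynomial (Σ_i x_i^2)·(Σ_{i,j} x_i^2 B_{ij} x_j^2) is nonnegative on ℝ^n. -/
/-!
With `y = (x₁², …, xₙ²)` the polynomial is `(∑ i, y i) * yᵀ B y`, which splits as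
`∑ i, y i * yᵀ (B - K⁽ⁱ⁾) y` plus the cubic form `∑ y i y j y k K⁽ⁱ⁾ j k`. The first part is
nonnegative by (i). Averaging the cubic form over the three choices of the outer index gives
coefficients `K⁽ⁱ⁾ j k + K⁽ʲ⁾ i k + K⁽ᵏ⁾ i j`, which vanish when an index repeats, by (ii) and
(iii), and are nonnegative otherwise, by (iv) and symmetry; since `y ≥ 0`, so is the cubic form.
-/

open Finset

section

variable {ι R : Type*} [Fintype ι]

theorem Matrix.PosSemidef.sum_sum_mul_nonneg {A : Matrix ι ι ℝ} (hA : A.PosSemidef)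
    (y : ι → ℝ) : 0 ≤ ∑ i, ∑ j, y i * A i j * y j := by
  simpa [dotProduct, mulVec, mul_sum, mul_assoc] using hA.dotProduct_mulVec_nonneg y

theorem sum_mul_sum_sum_eq_add_sum_sum_sum [CommRing R] (B : Matrix ι ι R)
    (K : ι → Matrix ι ι R) (y : ι → R) :
    (∑ i, y i) * ∑ j, ∑ k, y j * B j k * y k =
      ∑ i, y i * ∑ j, ∑ k, y j * (B - K i) j k * y k +
        ∑ i, ∑ j, ∑ k, y i * y j * y k * K i j k := by
  rw [sum_mul]
  simp only [mul_sum, Matrix.sub_apply, ← sum_add_distrib]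
  exact sum_congr rfl fun _ _ => sum_congr rfl fun _ _ => sum_congr rfl fun _ _ => by ring

theorem three_mul_sum_sum_sum_eq [CommRing R] (T : ι → ι → ι → R) (y : ι → R) :
    3 * ∑ i, ∑ j, ∑ k, y i * y j * y k * T i j k =
      ∑ i, ∑ j, ∑ k, y i * y j * y k * (T i j k + T j i k + T k i j) := by
  have h₁₂ : ∑ i, ∑ j, ∑ k, y i * y j * y k * T j i k =
      ∑ i, ∑ j, ∑ k, y i * y j * y k * T i j k := by
    rw [sum_comm]
    exact sum_congr rfl fun _ _ => sum_congr rfl fun _ _ => sum_congr rfl fun _ _ => by ring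
  have h₃₁₂ : ∑ i, ∑ j, ∑ k, y i * y j * y k * T k i j =
      ∑ i, ∑ j, ∑ k, y i * y j * y k * T i j k := by
    calc _ = ∑ i, ∑ k, ∑ j, y i * y j * y k * T k i j := sum_congr rfl fun _ _ => sum_comm
      _ = ∑ k, ∑ i, ∑ j, y i * y j * y k * T k i j := sum_comm
      _ = _ := sum_congr rfl fun _ _ => sum_congr rfl fun _ _ => sum_congr rfl fun _ _ => by ring
  simp only [mul_add, sum_add_distrib, h₁₂, h₃₁₂]
  ring

theorem sum_sum_sum_nonneg {T : ι → ι → ι → ℝ}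
    (hT : ∀ i j k, 0 ≤ T i j k + T j i k + T k i j) {y : ι → ℝ} (hy : 0 ≤ y) :
    0 ≤ ∑ i, ∑ j, ∑ k, y i * y j * y k * T i j k := by
  have h : 0 ≤ ∑ i, ∑ j, ∑ k, y i * y j * y k * (T i j k + T j i k + T k i j) :=
    sum_nonneg fun i _ => sum_nonneg fun j _ => sum_nonneg fun k _ =>
      mul_nonneg (mul_nonneg (mul_nonneg (hy i) (hy j)) (hy k)) (hT i j k)
  rw [← three_mul_sum_sum_sum_eq] at h
  linarith

end

theorem nonneg_of_nonneg_of_strictAnti {α : Type*} [LinearOrder α] {c : α → α → α → ℝ}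
    (hc₁₂ : ∀ i j k, c i j k = c j i k) (hc₂₃ : ∀ i j k, c i j k = c i k j)
    (hc : ∀ i j k, j < i → k < j → 0 ≤ c i j k) {i j k : α}
    (hij : i ≠ j) (hjk : j ≠ k) (hik : i ≠ k) : 0 ≤ c i j k := by
  rcases hij.lt_or_gt with hij | hij <;> rcases hjk.lt_or_gt with hjk | hjk <;>
    rcases hik.lt_or_gt with hik | hik <;> grind

theorem add_add_nonneg_of_isSymm {ι : Type*} [LinearOrder ι] (K : ι → Matrix ι ι ℝ)
    (hK : ∀ i, (K i).IsSymm) (h2 : ∀ i, K i i i = 0)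
    (h3 : ∀ i j, i ≠ j → K j i i + 2 * K i i j = 0)
    (h4 : ∀ i j k, j < i → k < j → 0 ≤ K i j k + K j i k + K k i j) (i j k : ι) :
    0 ≤ K i j k + K j i k + K k i j := by
  have hK' : ∀ a b c, K a b c = K a c b := fun a b c => (hK a).apply c b
  rcases eq_or_ne i j with rfl | hij
  · rcases eq_or_ne i k with rfl | hik
    · linarith [h2 i]
    · linarith [h3 i k hik]
  rcases eq_or_ne i k with rfl | hik
  · linarith [h3 i j hij, hK' i j i]
  rcases eq_or_ne j k with rfl | hjk
  · linarith [h3 j i hij.symm, hK' j i j]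
  refine nonneg_of_nonneg_of_strictAnti (c := fun i j k => K i j k + K j i k + K k i j)
    (fun i j k => ?_) (fun i j k => ?_) h4 hij hjk hik
  · linarith [hK' k i j]
  · linarith [hK' i j k, hK' j i k, hK' k i j]

theorem stmt_13_general (n : ℕ) (B : Matrix (Fin n) (Fin n) ℝ)
    (K : Fin n → Matrix (Fin n) (Fin n) ℝ) (hKsymm : ∀ i, (K i).IsSymm)
    (h1 : ∀ i, (B - K i).PosSemidef)
    (h2 : ∀ i, K i i i = 0)
    (h3 : ∀ i j, i ≠ j → K j i i + 2 * K i i j = 0)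
    (h4 : ∀ i j k, j < i → k < j → 0 ≤ K i j k + K j i k + K k i j) :
    ∀ x : Fin n → ℝ,
      0 ≤ (∑ i, x i ^ 2) * (∑ i, ∑ j, x i ^ 2 * B i j * x j ^ 2) := by
  intro x
  rw [sum_mul_sum_sum_eq_add_sum_sum_sum B K (fun i => x i ^ 2)]
  exact add_nonneg
    (sum_nonneg fun i _ => mul_nonneg (sq_nonneg _) ((h1 i).sum_sum_mul_nonneg _))
    (sum_sum_sum_nonneg (add_add_nonneg_of_isSymm K hKsymm h2 h3 h4) fun i => sq_nonneg (x i))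

theorem stmt_13 (n : ℕ) (B : Matrix (Fin n) (Fin n) ℝ) (hB : B.IsSymm)
    (K : Fin n → Matrix (Fin n) (Fin n) ℝ) (hKsymm : ∀ i, (K i).IsSymm)
    (h1 : ∀ i, (B - K i).PosSemidef)
    (h2 : ∀ i, K i i i = 0)
    (h3 : ∀ i j, i ≠ j → K j i i + 2 * K i i j = 0)
    (h4 : ∀ i j k, j < i → k < j → 0 ≤ K i j k + K j i k + K k i j) :
    ∀ x : Fin n → ℝ,
      0 ≤ (∑ i, x i ^ 2) * (∑ i, ∑ j, x i ^ 2 * B i j * x j ^ 2) :=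
  stmt_13_general n B K hKsymm h1 h2 h3 h4
end

section
/- Valid cut lemma: let Ω ⊆ ℝ^n_+ be a set with F ⊆ Ω, let u ∈ int(ℝ^n_+) and u_Ω = max{u^T x : x ∈ Ω} > 0. Then for every positive semidefinite matrix S and every x ∈ F ⊆ [0,1]^n ∩ Ω, the inequality x^T S x − u_Ω · Diag(S)^T diag(u)^{-1} x ≤ 0 holds, where Diag(S) is the vector of diagonal entries of S. -/
/-!
For `x ≥ 0`, the entrywise bound `S i j ≤ √(S i i) √(S j j)` of a positive semidefinite matrix gives
`xᵀ S x ≤ (∑ √(S i i) x i)²`, and Cauchy–Schwarz with the weights `u i x i` and `S i i x i / u i`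
bounds this by `(u ⬝ᵥ x) · ∑ S i i x i / u i`. For `x ∈ Ω` the first factor is at most `uΩ`.
-/

open Matrix BigOperators

namespace Matrix.PosSemidef

variable {ι : Type*} {S : Matrix ι ι ℝ}

theorem apply_sq_le_mul_diag (hS : S.PosSemidef) (i j : ι) : S i j ^ 2 ≤ S i i * S j j := by
  have hdet := (hS.submatrix ![i, j]).det_nonneg
  have hsymm : S j i = S i j := by simpa using congrFun (congrFun hS.isHermitian.eq i) j
  rw [det_fin_two] at hdet
  simp only [submatrix_apply, Matrix.cons_val_zero, Matrix.cons_val_one, hsymm] at hdet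
  nlinarith

theorem apply_le_sqrt_mul_sqrt (hS : S.PosSemidef) (i j : ι) :
    S i j ≤ √(S i i) * √(S j j) := by
  rw [← Real.sqrt_mul hS.diag_nonneg]
  exact (le_abs_self _).trans (Real.abs_le_sqrt (hS.apply_sq_le_mul_diag i j))

variable [Fintype ι]

theorem dotProduct_mulVec_le_sq_sum_sqrt_diag (hS : S.PosSemidef) {x : ι → ℝ} (hx : 0 ≤ x) :
    x ⬝ᵥ S *ᵥ x ≤ (∑ i, √(S i i) * x i) ^ 2 := by
  calc x ⬝ᵥ S *ᵥ x = ∑ i, ∑ j, x i * S i j * x j := by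
        simp only [dotProduct, mulVec, Finset.mul_sum, mul_assoc]
    _ ≤ ∑ i, ∑ j, x i * (√(S i i) * √(S j j)) * x j := by
        gcongr with i _ j _
        · exact hx j
        · exact hx i
        · exact hS.apply_le_sqrt_mul_sqrt i j
    _ = (∑ i, √(S i i) * x i) ^ 2 := by
        simp only [sq, Finset.sum_mul_sum]
        exact Finset.sum_congr rfl fun i _ => Finset.sum_congr rfl fun j _ => by ring

theorem dotProduct_mulVec_le_mul_sum_diag_div (hS : S.PosSemidef) {x u : ι → ℝ} (hx : 0 ≤ x)
    (hu : ∀ i, 0 < u i) : x ⬝ᵥ S *ᵥ x ≤ (u ⬝ᵥ x) * ∑ i, S i i * (x i / u i) := by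
  refine (hS.dotProduct_mulVec_le_sq_sum_sqrt_diag hx).trans ?_
  refine Finset.sum_sq_le_sum_mul_sum_of_sq_le_mul _
    (fun i _ => mul_nonneg (hu i).le (hx i))
    (fun i _ => mul_nonneg hS.diag_nonneg (div_nonneg (hx i) (hu i).le)) fun i _ => le_of_eq ?_
  rw [mul_pow, Real.sq_sqrt hS.diag_nonneg]
  field_simp [(hu i).ne']

end Matrix.PosSemidef

theorem stmt_16_general (n : ℕ) (Ω F : Set (Fin n → ℝ))
    (hΩ : ∀ x ∈ Ω, ∀ i, 0 ≤ x i)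
    (hFΩ : F ⊆ Ω)
    (u : Fin n → ℝ) (hu : ∀ i, 0 < u i)
    (uΩ : ℝ)
    (huΩ : IsGreatest {v : ℝ | ∃ x ∈ Ω, v = u ⬝ᵥ x} uΩ)
    (S : Matrix (Fin n) (Fin n) ℝ) (hS : S.PosSemidef) :
    ∀ x ∈ F, x ⬝ᵥ S.mulVec x - uΩ * ∑ i, S i i * (x i / u i) ≤ 0 := by
  intro x hxF
  have hxΩ : x ∈ Ω := hFΩ hxF
  have hx : 0 ≤ x := hΩ x hxΩ
  have hux : u ⬝ᵥ x ≤ uΩ := huΩ.2 ⟨x, hxΩ, rfl⟩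
  have hsum : 0 ≤ ∑ i, S i i * (x i / u i) :=
    Finset.sum_nonneg fun i _ => mul_nonneg hS.diag_nonneg (div_nonneg (hx i) (hu i).le)
  exact sub_nonpos.2 <|
    (hS.dotProduct_mulVec_le_mul_sum_diag_div hx hu).trans (mul_le_mul_of_nonneg_right hux hsum)

theorem stmt_16 (n : ℕ) (Ω F : Set (Fin n → ℝ))
    (hΩ : ∀ x ∈ Ω, ∀ i, 0 ≤ x i)
    (hFΩ : F ⊆ Ω)
    (hFbox : ∀ x ∈ F, ∀ i, 0 ≤ x i ∧ x i ≤ 1)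
    (u : Fin n → ℝ) (hu : ∀ i, 0 < u i)
    (uΩ : ℝ) (huΩpos : 0 < uΩ)
    (huΩ : IsGreatest {v : ℝ | ∃ x ∈ Ω, v = u ⬝ᵥ x} uΩ)
    (S : Matrix (Fin n) (Fin n) ℝ) (hS : S.PosSemidef) :
    ∀ x ∈ F, x ⬝ᵥ S.mulVec x - uΩ * ∑ i, S i i * (x i / u i) ≤ 0 :=
  stmt_16_general n Ω F hΩ hFΩ u hu uΩ huΩ S hS
end

section
/- For a positive semidefinite matrix S and x ∈ [0,1]^n, x^T S x ≤ Σ_{i=1}^n S_{ii} x_i. -/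
/-!
Testing positive semidefiniteness on `eᵢ - eⱼ` gives `Sᵢⱼ + Sⱼᵢ ≤ Sᵢᵢ + Sⱼⱼ`. For `x ≥ 0`,
symmetrizing `xᵀ S x = ∑ᵢⱼ Sᵢⱼ xᵢ xⱼ` and applying this bound termwise yields
`xᵀ S x ≤ (∑ᵢ Sᵢᵢ xᵢ) (∑ⱼ xⱼ)`, and the first factor is nonnegative since the diagonal is.
-/

open Matrix BigOperators

namespace Matrix.PosSemidef

variable {ι R : Type*} [Fintype ι] [CommRing R] [LinearOrder R] [IsStrictOrderedRing R]
  [StarRing R] [TrivialStar R] {S : Matrix ι ι R}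

theorem apply_add_apply_le [DecidableEq ι] (hS : S.PosSemidef) (i j : ι) :
    S i j + S j i ≤ S i i + S j j := by
  have h := hS.dotProduct_mulVec_nonneg (Pi.single i 1 - Pi.single j 1)
  simp only [star_trivial, mulVec_sub, dotProduct_sub, sub_dotProduct, mulVec_single_one,
    single_one_dotProduct, col_apply] at h
  linarith

theorem dotProduct_mulVec_le (hS : S.PosSemidef) {x : ι → R} (hx : 0 ≤ x) :
    x ⬝ᵥ S *ᵥ x ≤ (∑ i, S i i * x i) * ∑ i, x i := by
  classical
  have hquad : x ⬝ᵥ S *ᵥ x = ∑ i, ∑ j, S i j * (x i * x j) := by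
    simp only [dotProduct, mulVec, Finset.mul_sum]
    exact Finset.sum_congr rfl fun i _ => Finset.sum_congr rfl fun j _ => by ring
  have hsymm : 2 * (x ⬝ᵥ S *ᵥ x) = ∑ i, ∑ j, (S i j + S j i) * (x i * x j) := by
    rw [hquad, two_mul]
    nth_rw 2 [Finset.sum_comm]
    simp only [← Finset.sum_add_distrib]
    exact Finset.sum_congr rfl fun i _ => Finset.sum_congr rfl fun j _ => by ring
  have hdiag : ∑ i, ∑ j, (S i i + S j j) * (x i * x j) =
      2 * ((∑ i, S i i * x i) * ∑ i, x i) := by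
    simp only [add_mul, Finset.sum_add_distrib, Finset.sum_mul_sum]
    rw [Finset.sum_comm (f := fun i j => S j j * (x i * x j)), two_mul]
    congr 1 <;> exact Finset.sum_congr rfl fun i _ => Finset.sum_congr rfl fun j _ => by ring
  refine le_of_mul_le_mul_left ?_ (zero_lt_two : (0 : R) < 2)
  rw [hsymm, ← hdiag]
  exact Finset.sum_le_sum fun i _ => Finset.sum_le_sum fun j _ =>
    mul_le_mul_of_nonneg_right (hS.apply_add_apply_le i j) (mul_nonneg (hx i) (hx j))

end Matrix.PosSemidef

theorem stmt_17 (n : ℕ) (S : Matrix (Fin n) (Fin n) ℝ) (hS : S.PosSemidef)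
    (x : Fin n → ℝ) (hx : ∀ i, 0 ≤ x i ∧ x i ≤ 1)
    (uΩ : ℝ) (huΩ : ∑ i, x i ≤ uΩ) :
    x ⬝ᵥ S.mulVec x - uΩ * ∑ i, S i i * x i ≤ 0 := by
  have hx₀ : 0 ≤ x := fun i => (hx i).1
  have hdiag : 0 ≤ ∑ i, S i i * x i :=
    Finset.sum_nonneg fun i _ => mul_nonneg hS.diag_nonneg (hx₀ i)
  rw [sub_nonpos, mul_comm uΩ]
  calc x ⬝ᵥ S *ᵥ x ≤ (∑ i, S i i * x i) * ∑ i, x i := hS.dotProduct_mulVec_le hx₀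
    _ ≤ (∑ i, S i i * x i) * uΩ := mul_le_mul_of_nonneg_left huΩ hdiag
end
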